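/- arXiv:1009.1101 — 4 statements merged into one kernel-verified Lean document; each statement's English description precedes it below -/
import Mathlib

section
/- Let K be a number field of degree n = s + 2t with t > 0, having s real embeddings σ₁,…,σ_s and 2t complex embeddings. Let O_K be its ring of integers and let σ : O_K → ℝ^s be the map ξ ↦ (σ₁(ξ),…,σ_s(ξ)). Then the image σ(O_K) is dense in ℝ^s. -/
/-!
By Dirichlet's unit theorem there is a unit `u` with `w u < 1` at every infinite place except a
chosen complex one, so the powers of `u` give nonzero integers `α` that are arbitrarily small at
all real places. The image of `𝓞 K` in the mixed space `ℝ^s × ℂ^t` is a full lattice, so every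
point lies within a fixed distance `M` of it; approximating `a / α` by the real part of some `β`
then approximates `a` by the real part of `α * β` up to `‖α‖ * M`.
-/

open NumberField

namespace NumberField

open InfinitePlace mixedEmbedding

open scoped Classical

variable {K : Type*} [Field K]

theorem ComplexEmbedding.isReal_ofRealHom_comp (φ : K →+* ℝ) :
    ComplexEmbedding.IsReal (Complex.ofRealHom.comp φ) := by
  rw [ComplexEmbedding.isReal_iff]
  ext x
  simp [Complex.conj_ofReal]

variable (K) in
noncomputable def InfinitePlace.realEmbeddingEquiv :
    (K →+* ℝ) ≃ {w : InfinitePlace K // w.IsReal} where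
  toFun φ := ⟨mk (Complex.ofRealHom.comp φ),
    isReal_mk_iff.mpr (ComplexEmbedding.isReal_ofRealHom_comp φ)⟩
  invFun w := embedding_of_isReal w.2
  left_inv φ := by
    ext x
    apply Complex.ofReal_injective
    simp only [embedding_of_isReal_apply,
      embedding_mk_eq_of_isReal (ComplexEmbedding.isReal_ofRealHom_comp φ)]
    rfl
  right_inv w := by
    ext1
    convert mk_embedding w.1
    ext x
    simp

variable [NumberField K]

theorem exists_unit_norm_fst_mixedEmbedding_lt_one {w₀ : InfinitePlace K} (hw₀ : w₀.IsComplex) :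
    ∃ u : (𝓞 K)ˣ, ‖(mixedEmbedding K u).1‖ < 1 := by
  obtain ⟨u, hu⟩ := Units.dirichletUnitTheorem.exists_unit K w₀
  refine ⟨u, (pi_norm_lt_iff one_pos).mpr fun w => ?_⟩
  rw [mixedEmbedding_apply_isReal, norm_embedding_of_isReal]
  exact lt_of_not_ge fun h => (Real.log_nonneg h).not_gt (hu w (ne_of_isReal_isComplex w.2 hw₀))

theorem exists_ne_zero_norm_fst_mixedEmbedding_lt {w₀ : InfinitePlace K} (hw₀ : w₀.IsComplex)
    {δ : ℝ} (hδ : 0 < δ) : ∃ α : 𝓞 K, α ≠ 0 ∧ ‖(mixedEmbedding K α).1‖ < δ := by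
  obtain ⟨u, hu⟩ := exists_unit_norm_fst_mixedEmbedding_lt_one hw₀
  obtain ⟨n, hn⟩ := exists_pow_lt_of_lt_one hδ hu
  refine ⟨(u : 𝓞 K) ^ (n + 1), pow_ne_zero _ u.ne_zero, ?_⟩
  calc ‖(mixedEmbedding K ((u : 𝓞 K) ^ (n + 1) : 𝓞 K)).1‖
      = ‖(mixedEmbedding K u).1 ^ (n + 1)‖ := by simp
    _ ≤ ‖(mixedEmbedding K u).1‖ ^ (n + 1) := norm_pow_le' _ n.succ_pos
    _ ≤ ‖(mixedEmbedding K u).1‖ ^ n := pow_le_pow_of_le_one (norm_nonneg _) hu.le n.le_succ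
    _ < δ := hn

theorem exists_norm_sub_mixedEmbedding_le (x : mixedSpace K) :
    ∃ β : 𝓞 K, ‖x - mixedEmbedding K β‖ ≤ ∑ i, ‖latticeBasis K i‖ := by
  obtain ⟨β, hβ⟩ :=
    (mixedEmbedding.mem_span_latticeBasis (K := K)).mp (ZSpan.floor (latticeBasis K) x).2
  refine ⟨β, ?_⟩
  have := ZSpan.norm_fract_le (latticeBasis K) x
  rwa [ZSpan.fract_apply, ← hβ] at this

theorem exists_norm_sub_fst_mixedEmbedding_mul_le {α : 𝓞 K} (hα : α ≠ 0)
    (a : {w : InfinitePlace K // w.IsReal} → ℝ) :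
    ∃ β : 𝓞 K, ‖a - (mixedEmbedding K (α * β)).1‖ ≤
      ‖(mixedEmbedding K α).1‖ * ∑ i, ‖latticeBasis K i‖ := by
  set x := (mixedEmbedding K α).1
  have hx : ∀ w, x w ≠ 0 := fun w => by
    simpa [x, mixedEmbedding_apply_isReal] using hα
  obtain ⟨β, hβ⟩ := exists_norm_sub_mixedEmbedding_le ((a / x, 0) : mixedSpace K)
  refine ⟨β, ?_⟩
  have hfactor : a - (mixedEmbedding K (α * β)).1 = x * (a / x - (mixedEmbedding K β).1) := by
    ext w
    simp only [map_mul, Prod.fst_mul, Pi.sub_apply, Pi.mul_apply, Pi.div_apply, x]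
    rw [mul_sub, mul_div_cancel₀ _ (hx w)]
  calc ‖a - (mixedEmbedding K (α * β)).1‖
      ≤ ‖x‖ * ‖a / x - (mixedEmbedding K β).1‖ := hfactor ▸ norm_mul_le _ _
    _ ≤ ‖x‖ * ∑ i, ‖latticeBasis K i‖ := by
      gcongr
      exact (norm_fst_le _).trans hβ

theorem denseRange_fst_mixedEmbedding {w₀ : InfinitePlace K} (hw₀ : w₀.IsComplex) :
    DenseRange fun ξ : 𝓞 K => (mixedEmbedding K ξ).1 := by
  rw [Metric.denseRange_iff]
  intro a ε hε
  set M := ∑ i, ‖latticeBasis K i‖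
  have hM : 0 ≤ M := Finset.sum_nonneg fun i _ => norm_nonneg _
  obtain ⟨α, hα, hαδ⟩ := exists_ne_zero_norm_fst_mixedEmbedding_lt hw₀
    (div_pos hε (by linarith : 0 < M + 1))
  obtain ⟨β, hβ⟩ := exists_norm_sub_fst_mixedEmbedding_mul_le hα a
  refine ⟨α * β, ?_⟩
  rw [dist_eq_norm]
  calc _ ≤ ‖(mixedEmbedding K α).1‖ * M := hβ
    _ ≤ ε / (M + 1) * M := by gcongr
    _ < ε := by
      rw [div_mul_eq_mul_div, div_lt_iff₀ (by linarith)]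
      nlinarith

end NumberField

theorem DenseRange.comp_equiv_apply {α ι ι' X : Type*} [TopologicalSpace X] {f : α → ι → X}
    (hf : DenseRange f) (e : ι' ≃ ι) : DenseRange fun a i => f a (e i) :=
  (Function.Surjective.denseRange fun y => ⟨fun j => y (e.symm j), by simp⟩).comp hf
    (by fun_prop : Continuous fun (x : ι → X) i => x (e i))

/-- Let `K` be a number field of degree `n = s + 2t`, `t > 0`, having
exactly `s` real embeddings `σr 0, …, σr (s-1)` (so `σr` is a bijection onto the type of
real embeddings `K →+* ℝ`) and `2t` complex embeddings.  Then the image of the ring of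
integers `𝓞 K` under `ξ ↦ (σr i ξ)ᵢ` is dense in `ℝ^s`. -/
theorem ot_integers_dense_in_real_embeddings
    (K : Type*) [Field K] [NumberField K] (s t : ℕ) (ht : 0 < t)
    (hdeg : Module.finrank ℚ K = s + 2 * t)
    (σr : Fin s → (K →+* ℝ)) (hσr : Function.Bijective σr) :
    DenseRange (fun ξ : 𝓞 K => (fun i => σr i (algebraMap (𝓞 K) K ξ) : Fin s → ℝ)) := by
  classical
  let e := (Equiv.ofBijective σr hσr).trans (InfinitePlace.realEmbeddingEquiv K)
  have hreal : InfinitePlace.nrRealPlaces K = s :=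
    (Fintype.card_congr e).symm.trans (Fintype.card_fin s)
  have hcomplex : 0 < InfinitePlace.nrComplexPlaces K := by
    have := InfinitePlace.card_add_two_mul_card_eq_rank K
    omega
  obtain ⟨⟨w₀, hw₀⟩⟩ := Fintype.card_pos_iff.mp hcomplex
  have hσ : ∀ i ξ, σr i ξ = (mixedEmbedding K ξ).1 (e i) := fun i ξ => by
    rw [mixedEmbedding.mixedEmbedding_apply_isReal]
    exact congrArg (· ξ) ((InfinitePlace.realEmbeddingEquiv K).symm_apply_apply (σr i)).symm
  simpa only [hσ] using (denseRange_fst_mixedEmbedding hw₀).comp_equiv_apply e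
end

section
/- Let K be a number field and let V₁ be the product of some but not all archimedean completions of K. Then the image of the ring of integers O_K under the natural diagonal embedding into V₁ is dense in V₁. -/
/-!
Rounding the coordinates of `y ∈ K` in an integral basis puts `y` within a bounded distance of
`𝓞 K` at every infinite place. Dirichlet's unit theorem gives a nonzero `α ∈ 𝓞 K` as small as we
like at every infinite place but one; rounding `y / α` and multiplying back by `α` then
approximates `y` arbitrarily well at all those places. Hence `𝓞 K` is dense in `K` for the
topology of all infinite places but one, and weak approximation gives density in the completions.
-/

open Filter

namespace NumberField

variable {K : Type*} [Field K] [NumberField K]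

theorem exists_infinitePlace_sub_le_sum_integralBasis (y : K) :
    ∃ ξ : 𝓞 K, ∀ w : InfinitePlace K, w (y - ξ) ≤ ∑ i, w (integralBasis K i) := by
  set b := integralBasis K
  refine ⟨∑ i, ⌊b.repr y i⌋ • RingOfIntegers.basis K i, fun w => ?_⟩
  calc w (y - ((∑ i, ⌊b.repr y i⌋ • RingOfIntegers.basis K i : 𝓞 K) : K))
      = w (∑ i, Int.fract (b.repr y i) • b i) := by
        congr 1
        nth_rw 1 [← b.sum_repr y]
        simp only [map_sum, map_zsmul, b, ← integralBasis_apply, ← Int.self_sub_floor, sub_smul,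
          Finset.sum_sub_distrib, Int.cast_smul_eq_zsmul]
    _ ≤ ∑ i, w (Int.fract (b.repr y i) • b i) := w.1.sum_le _ _
    _ ≤ ∑ i, w (b i) := by
        gcongr with i
        rw [Rat.smul_def, map_mul, InfinitePlace.map_ratCast]
        refine mul_le_of_le_one_left (apply_nonneg w _) ?_
        rw [← Rat.norm_cast_real, Real.norm_of_nonneg (mod_cast Int.fract_nonneg _)]
        exact_mod_cast (Int.fract_lt_one _).le

namespace InfinitePlace

theorem exists_ne_zero_forall_ne_lt (w₀ : InfinitePlace K) {δ : InfinitePlace K → ℝ}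
    (hδ : ∀ w, 0 < δ w) : ∃ α : 𝓞 K, α ≠ 0 ∧ ∀ w ≠ w₀, w α < δ w := by
  obtain ⟨u, hu⟩ := Units.dirichletUnitTheorem.exists_unit K w₀
  have hsmall : ∀ᶠ n : ℕ in atTop, ∀ w ≠ w₀, w ((u ^ n : (𝓞 K)ˣ) : K) < δ w := by
    refine eventually_all.2 fun w => ?_
    by_cases hw : w = w₀
    · exact .of_forall fun _ h => absurd hw h
    · have hlt : w (u : K) < 1 := (Real.log_neg_iff (pos_iff.2 (by simp))).1 (hu w hw)
      filter_upwards [(tendsto_pow_atTop_nhds_zero_of_lt_one (apply_nonneg w _) hlt)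
        |>.eventually_lt_const (hδ w)] with n hn _
      simpa using hn
  obtain ⟨n, hn⟩ := hsmall.exists
  exact ⟨_, (u ^ n).ne_zero, hn⟩

theorem exists_forall_ne_sub_lt (w₀ : InfinitePlace K) (y : K) {ε : ℝ} (hε : 0 < ε) :
    ∃ ξ : 𝓞 K, ∀ w ≠ w₀, w (y - ξ) < ε := by
  set C : InfinitePlace K → ℝ := fun w => ∑ i, w (integralBasis K i)
  have hC : ∀ w, 0 < C w + 1 := fun w =>
    add_pos_of_nonneg_of_pos (Finset.sum_nonneg fun _ _ => apply_nonneg w _) one_pos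
  obtain ⟨α, hα0, hα⟩ := exists_ne_zero_forall_ne_lt w₀ fun w => div_pos hε (hC w)
  obtain ⟨ξ, hξ⟩ := exists_infinitePlace_sub_le_sum_integralBasis (y / α)
  have hα0' : (α : K) ≠ 0 := RingOfIntegers.coe_ne_zero_iff.2 hα0
  refine ⟨α * ξ, fun w hw => ?_⟩
  calc w (y - ↑(α * ξ)) = w α * w (y / α - ξ) := by
        rw [← map_mul, mul_sub, mul_div_cancel₀ _ hα0']
        norm_cast
    _ ≤ w α * (C w + 1) := by gcongr; exact (hξ w).trans (le_add_of_nonneg_right zero_le_one)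
    _ < ε := (lt_div_iff₀ (hC w)).1 (hα w hw)

end InfinitePlace

theorem denseRange_ringOfIntegers_pi_withAbs {S : Set (InfinitePlace K)} (hS : S ≠ Set.univ) :
    DenseRange fun (ξ : 𝓞 K) (v : S) => WithAbs.toAbs v.1.1 (ξ : K) := by
  have : Fintype S := Fintype.ofFinite S
  obtain ⟨w₀, hw₀⟩ := (Set.ne_univ_iff_exists_notMem S).1 hS
  have hK : DenseRange fun (x : K) (v : S) => WithAbs.toAbs v.1.1 x :=
    (Subtype.surjective_restrict _).denseRange.comp (InfinitePlace.denseRange_algebraMap_pi K)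
      (continuous_pi fun v => continuous_apply v.1)
  refine (hK.mono (Set.range_subset_iff.2 fun y => ?_)).of_closure
  refine Metric.mem_closure_range_iff.2 fun ε hε => ?_
  obtain ⟨ξ, hξ⟩ := InfinitePlace.exists_forall_ne_sub_lt w₀ y hε
  exact ⟨ξ, (dist_pi_lt_iff hε).2 fun v =>
    (dist_eq_norm _ _).trans_lt (hξ v (ne_of_mem_of_not_mem v.2 hw₀))⟩

end NumberField

open NumberField

theorem ot_integers_dense_in_some_archimedean_completions_general
    (K : Type*) [Field K] [NumberField K]
    (S : Set (InfinitePlace K)) (hS' : S ≠ Set.univ) :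
    DenseRange (fun ξ : 𝓞 K =>
      (fun v : S => algebraMap K v.1.1.Completion (algebraMap (𝓞 K) K ξ) :
        (v : S) → v.1.1.Completion)) :=
  (DenseRange.piMap fun _ => UniformSpace.Completion.denseRange_coe).comp
    (denseRange_ringOfIntegers_pi_withAbs hS')
    (continuous_pi fun v => (UniformSpace.Completion.continuous_coe _).comp (continuous_apply v))

/-- Let `K` be a number field and let `V₁ = Π_{v ∈ S} K_v` be the product of
some (`S` nonempty) but not all (`S ≠ univ`) archimedean completions of `K` (completions at
infinite places).  Then the image of the ring of integers `𝓞 K` under the diagonal embedding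
into `V₁` is dense. -/
theorem ot_integers_dense_in_some_archimedean_completions
    (K : Type*) [Field K] [NumberField K]
    (S : Set (InfinitePlace K)) (hS : S.Nonempty) (hS' : S ≠ Set.univ) :
    DenseRange (fun ξ : 𝓞 K =>
      (fun v : S => algebraMap K v.1.1.Completion (algebraMap (𝓞 K) K ξ) :
        (v : S) → v.1.1.Completion)) :=
  ot_integers_dense_in_some_archimedean_completions_general K S hS'
end

section
/- Let K be a number field of degree n = s + 2t, t > 0, with s real embeddings, and let O_K act on ℍ^s × ℂ^t by translations T_a(z_i) = z_i + σ_i(a). Fix (t₁,…,t_s) ∈ ℍ^s and set T = {z : z_i = t_i for i ≤ s}. Then the closure of the orbit O_K · T equals Z = {z : Im z_i = Im t_i for i ≤ s}. -/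
/-!
Every translate of `T` lies in the closed set `Z`, and `Z` is swept out by translating `T` by
arbitrary real vectors in the first `s` coordinates, so it suffices that the real embeddings map
`𝓞 K` onto a dense subgroup of `ℝ^s`. Because `K` has a complex place, Minkowski's theorem
gives nonzero `a ∈ 𝓞 K` all of whose real embeddings are as small as we like. By Dedekind's
independence of characters the vectors of real embeddings of `𝓞 K`, hence of the ideal `a 𝓞 K`,
span `ℝ^s`; a spanning family of arbitrarily short lattice vectors makes the lattice dense,
since rounding the real coefficients of a point to integers moves it by at most their total length.
-/

open NumberField

noncomputable section

/-- The combined embedding. -/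
def otEmb {K : Type*} [Field K] {s t : ℕ}
    (σr : Fin s → (K →+* ℝ)) (σc : Fin t → (K →+* ℂ)) (i : Fin (s + t)) (x : K) : ℂ :=
  Fin.addCases (motive := fun _ => ℂ) (fun i₀ => (σr i₀ x : ℂ)) (fun j₀ => σc j₀ x) i

/-- Translation part of the OT action: `T_a(z)ᵢ = zᵢ + σᵢ(a)`. -/
def otT {K : Type*} [Field K] [NumberField K] {s t : ℕ}
    (σr : Fin s → (K →+* ℝ)) (σc : Fin t → (K →+* ℂ)) (a : 𝓞 K)
    (z : Fin (s + t) → ℂ) : Fin (s + t) → ℂ :=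
  fun i => z i + otEmb σr σc i (algebraMap (𝓞 K) K a)


theorem span_range_eval_eq_top_of_linearIndependent {ι X L : Type*} [Field L] [Fintype ι]
    {f : ι → X → L} (hf : LinearIndependent L f) :
    Submodule.span L (Set.range fun x i => f i x) = ⊤ := by
  classical
  by_contra hne
  obtain ⟨φ, hφ, hφspan⟩ :=
    Submodule.exists_dual_map_eq_bot_of_lt_top (lt_top_iff_ne_top.2 hne) inferInstance
  have hvanish (x : X) : φ (fun i => f i x) = 0 := by
    have := Submodule.mem_map_of_mem (f := φ)
      (Submodule.subset_span (Set.mem_range_self (f := fun x i => f i x) x))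
    rwa [hφspan, Submodule.mem_bot] at this
  have hcoeff : ∀ i, φ (fun j => if i = j then 1 else 0) = 0 := by
    refine Fintype.linearIndependent_iff.1 hf _ (funext fun x => ?_)
    refine Eq.trans ?_ (hvanish x)
    rw [LinearMap.pi_apply_eq_sum_univ φ (fun i => f i x), Finset.sum_apply]
    simp only [Pi.smul_apply, smul_eq_mul, mul_comm]
  exact hφ (LinearMap.ext fun v => by
    rw [LinearMap.pi_apply_eq_sum_univ φ v]
    simp [hcoeff])

theorem exists_norm_sub_sum_zsmul_le {ι E : Type*} [Fintype ι] [SeminormedAddCommGroup E]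
    [NormedSpace ℝ E] (u : ι → E) {x : E} (hx : x ∈ Submodule.span ℝ (Set.range u)) :
    ∃ m : ι → ℤ, ‖x - ∑ j, m j • u j‖ ≤ ∑ j, ‖u j‖ := by
  obtain ⟨c, rfl⟩ := (Submodule.mem_span_range_iff_exists_fun ℝ).1 hx
  refine ⟨fun j => ⌊c j⌋, ?_⟩
  have hfract : ∑ j, c j • u j - ∑ j, ⌊c j⌋ • u j = ∑ j, Int.fract (c j) • u j := by
    simp only [← Finset.sum_sub_distrib, ← Int.cast_smul_eq_zsmul ℝ, ← sub_smul, Int.fract]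
  rw [hfract]
  refine (norm_sum_le _ _).trans (Finset.sum_le_sum fun j _ => ?_)
  rw [norm_smul, Real.norm_of_nonneg (Int.fract_nonneg _)]
  exact mul_le_of_le_one_left (norm_nonneg _) (Int.fract_lt_one _).le

theorem AddSubgroup.dense_of_forall_exists_span_eq_top_norm_lt {ι E : Type*} [Fintype ι]
    [SeminormedAddCommGroup E] [NormedSpace ℝ E] (H : AddSubgroup E)
    (h : ∀ ε > 0, ∃ u : ι → E, (∀ j, u j ∈ H) ∧ Submodule.span ℝ (Set.range u) = ⊤ ∧
      ∀ j, ‖u j‖ < ε) :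
    Dense (H : Set E) := by
  refine Metric.dense_iff.2 fun x δ hδ => ?_
  obtain ⟨u, huH, hspan, hsmall⟩ := h (δ / (Fintype.card ι + 1)) (by positivity)
  obtain ⟨m, hm⟩ := exists_norm_sub_sum_zsmul_le u (hspan ▸ Submodule.mem_top : x ∈ _)
  refine ⟨∑ j, m j • u j, ?_, H.sum_mem fun j _ => H.zsmul_mem (huH j) _⟩
  rw [Metric.mem_ball, dist_comm, dist_eq_norm]
  calc ‖x - ∑ j, m j • u j‖ ≤ ∑ j, ‖u j‖ := hm
    _ ≤ ∑ _j : ι, δ / (Fintype.card ι + 1) := Finset.sum_le_sum fun j _ => (hsmall j).le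
    _ < δ := by
      rw [Finset.sum_const, Finset.card_univ, nsmul_eq_mul, mul_div_left_comm]
      exact mul_lt_of_lt_one_right hδ ((div_lt_one (by positivity)).2 (by linarith))

theorem Submodule.span_range_comp_basis {ι R M E : Type*} [Ring R] [AddCommGroup M]
    [AddCommGroup E] [Module R E] (b : Module.Basis ι ℤ M) (f : M →+ E) :
    span R (Set.range (f ∘ b)) = span R (Set.range f) := by
  refine le_antisymm (span_mono (Set.range_comp_subset_range _ _)) (span_le.2 ?_)
  have hrange : Set.range f ⊆ span ℤ (Set.range (f ∘ b)) := by
    rw [Set.range_comp, ← f.coe_toIntLinearMap, span_image, b.span_eq, map_top,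
      LinearMap.coe_range]
  exact hrange.trans (span_le_restrictScalars ℤ R _)

theorem Submodule.span_range_mul_right_eq_top {ι R A : Type*} [CommSemiring R] [Semiring A]
    [Algebra R A] {u : ι → A} (hu : span R (Set.range u) = ⊤) {d : A} (hd : IsUnit d) :
    span R (Set.range fun j => u j * d) = ⊤ := by
  change span R (Set.range (LinearMap.mulRight R d ∘ u)) = ⊤
  rw [Set.range_comp, ← map_span, hu, map_top, LinearMap.range_eq_top]
  exact fun y => ⟨y * ↑hd.unit⁻¹, by simp [mul_assoc]⟩

namespace NumberField

variable {K : Type*} [Field K]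

open InfinitePlace mixedEmbedding

theorem exists_ne_zero_forall_ne_lt [NumberField K] (w₀ : InfinitePlace K) {ε : ℝ} (hε : 0 < ε) :
    ∃ a : 𝓞 K, a ≠ 0 ∧ ∀ w, w ≠ w₀ → w a < ε := by
  obtain ⟨B, hB⟩ : ∃ B : ℕ, minkowskiBound K 1 < convexBodyLTFactor K * B := by
    simp_rw [mul_comm (convexBodyLTFactor K : ENNReal)]
    exact ENNReal.exists_nat_mul_gt (ENNReal.coe_ne_zero.2 (convexBodyLTFactor_ne_zero K))
      (minkowskiBound_lt_top K 1).ne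
  -- the box `w < ε` is enlarged at `w₀` alone until its volume exceeds the Minkowski bound
  obtain ⟨g, hg, hprod⟩ := adjust_f K (f := fun _ => ⟨ε, hε.le⟩) (w₁ := w₀) B
    fun _ _ => (show (0 : NNReal) < ⟨ε, hε.le⟩ from hε).ne'
  obtain ⟨a, ha, hlt⟩ := exists_ne_zero_mem_ringOfIntegers_lt K (f := g) (by
    rw [convexBodyLT_volume]; convert hB; exact congr_arg _ hprod)
  refine ⟨a, ha, fun w hw => ?_⟩
  have hw_lt := hlt w
  rwa [hg w hw] at hw_lt

theorem InfinitePlace.isReal_mk_ofRealHom_comp (σ : K →+* ℝ) :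
    IsReal (mk (Complex.ofRealHom.comp σ)) :=
  isReal_mk_iff.2 <| ComplexEmbedding.isReal_iff.2 <| RingHom.ext fun x => by simp

theorem InfinitePlace.mk_ofRealHom_comp_apply (σ : K →+* ℝ) (x : K) :
    mk (Complex.ofRealHom.comp σ) x = |σ x| := by
  simp [apply]

theorem InfinitePlace.isComplex_mk_of_im_ne_zero {φ : K →+* ℂ} {x : K} (hx : (φ x).im ≠ 0) :
    IsComplex (mk φ) :=
  isComplex_mk_iff.2 fun hφ => hx <| Complex.conj_eq_iff_im.1 (RingHom.congr_fun hφ x)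

theorem exists_ne_zero_forall_abs_lt [NumberField K] {ι : Type*} (σ : ι → K →+* ℝ)
    {φ : K →+* ℂ} {x : K} (hx : (φ x).im ≠ 0) {ε : ℝ} (hε : 0 < ε) :
    ∃ a : 𝓞 K, a ≠ 0 ∧ ∀ i, |σ i a| < ε := by
  obtain ⟨a, ha, hlt⟩ := exists_ne_zero_forall_ne_lt (InfinitePlace.mk φ) hε
  refine ⟨a, ha, fun i => ?_⟩
  rw [← mk_ofRealHom_comp_apply]
  exact hlt _ (ne_of_isReal_isComplex (isReal_mk_ofRealHom_comp _)
    (isComplex_mk_of_im_ne_zero hx))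

end NumberField

namespace NumberField.RingOfIntegers

variable {K : Type*} [Field K] {ι : Type*}

def realEmbeddingsPi (σ : ι → K →+* ℝ) : 𝓞 K →+* (ι → ℝ) :=
  RingHom.pi fun i => (σ i).comp (algebraMap (𝓞 K) K)

@[simp]
theorem realEmbeddingsPi_apply (σ : ι → K →+* ℝ) (a : 𝓞 K) (i : ι) :
    realEmbeddingsPi σ a i = σ i a :=
  rfl

theorem span_range_realEmbeddingsPi [NumberField K] [Fintype ι] {σ : ι → K →+* ℝ}
    (hσ : Function.Injective σ) :
    Submodule.span ℝ (Set.range (realEmbeddingsPi σ)) = ⊤ := by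
  let χ : ι → (𝓞 K →* ℝ) := fun i => ((σ i).comp (algebraMap (𝓞 K) K)).toMonoidHom
  have hχ : Function.Injective χ := fun i j hij =>
    hσ <| IsLocalization.ringHom_ext (nonZeroDivisors (𝓞 K))
      (RingHom.ext fun a => DFunLike.congr_fun hij a)
  exact span_range_eval_eq_top_of_linearIndependent
    ((linearIndependent_monoidHom (𝓞 K) ℝ).comp χ hχ)

theorem dense_range_realEmbeddingsPi [NumberField K] [Fintype ι] {σ : ι → K →+* ℝ}
    (hσ : Function.Injective σ) {φ : K →+* ℂ} {x : K} (hx : (φ x).im ≠ 0) :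
    Dense (Set.range (realEmbeddingsPi σ)) := by
  set v := realEmbeddingsPi σ
  set ω := RingOfIntegers.basis K
  set M := ∑ j, ‖v (ω j)‖
  have hM : 0 ≤ M := Finset.sum_nonneg fun j _ => norm_nonneg _
  refine v.range.toAddSubgroup.dense_of_forall_exists_span_eq_top_norm_lt
    (ι := Module.Free.ChooseBasisIndex ℤ (𝓞 K)) fun ε hε => ?_
  obtain ⟨a, ha0, ha⟩ := exists_ne_zero_forall_abs_lt σ hx (ε := ε / (M + 1)) (by positivity)
  have hva : ‖v a‖ ≤ ε / (M + 1) :=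
    (pi_norm_le_iff_of_nonneg (by positivity)).2 fun i => (ha i).le
  have hunit : IsUnit (v a) := Pi.isUnit_iff.2 fun i =>
    ((map_ne_zero (σ i)).2 (RingOfIntegers.coe_ne_zero_iff.2 ha0)).isUnit
  refine ⟨fun j => v (ω j * a), fun j => ⟨_, rfl⟩, ?_, fun j => ?_⟩
  · simp only [map_mul]
    refine Submodule.span_range_mul_right_eq_top ?_ hunit
    rw [← span_range_realEmbeddingsPi hσ]
    exact Submodule.span_range_comp_basis ω v.toAddMonoidHom
  · calc ‖v (ω j * a)‖ ≤ ‖v (ω j)‖ * ‖v a‖ := map_mul v _ _ ▸ norm_mul_le _ _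
      _ ≤ M * (ε / (M + 1)) :=
        mul_le_mul (Finset.single_le_sum (fun j _ => norm_nonneg (v (ω j))) (Finset.mem_univ j))
          hva (norm_nonneg _) hM
      _ < ε := by
        rw [mul_div_left_comm]
        exact mul_lt_of_lt_one_right hε ((div_lt_one (by positivity)).2 (by linarith))

end NumberField.RingOfIntegers

section

variable {K : Type*} [Field K] [NumberField K] {s t : ℕ} (σr : Fin s → (K →+* ℝ))
  (σc : Fin t → (K →+* ℂ)) (a : 𝓞 K) (w : Fin (s + t) → ℂ)

@[simp]
theorem otT_castAdd (i : Fin s) :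
    otT σr σc a w (Fin.castAdd t i) = w (Fin.castAdd t i) + σr i a := by
  simp [otT, otEmb]

@[simp]
theorem otT_natAdd (j : Fin t) :
    otT σr σc a w (Fin.natAdd s j) = w (Fin.natAdd s j) + σc j a := by
  simp [otT, otEmb]

end

open NumberField.RingOfIntegers in
theorem ot_orbit_closure_of_leaf_general
    (K : Type*) [Field K] [NumberField K] (s t : ℕ) (ht : 0 < t)
    (σr : Fin s → (K →+* ℝ)) (hσr : Function.Bijective σr)
    (σc : Fin t → (K →+* ℂ))
    (hnonreal : ∀ j, ∃ x, (σc j x).im ≠ 0)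
    (tt : Fin s → ℂ) :
    closure {z : Fin (s + t) → ℂ | ∃ (a : 𝓞 K) (w : Fin (s + t) → ℂ),
        (∀ i : Fin s, w (Fin.castAdd t i) = tt i) ∧ z = otT σr σc a w}
      = {z : Fin (s + t) → ℂ | ∀ i : Fin s, (z (Fin.castAdd t i)).im = (tt i).im} := by
  refine (closure_minimal ?_ ?_).antisymm fun z hz => Metric.mem_closure_iff.2 fun δ hδ => ?_
  · rintro _ ⟨a, w, hw, rfl⟩ i
    simp [hw]
  · simp only [Set.ofPred_forall]
    exact isClosed_iInter fun i => isClosed_eq (by fun_prop) continuous_const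
  obtain ⟨x, hx⟩ := hnonreal ⟨0, ht⟩
  obtain ⟨_, ⟨a, rfl⟩, ha⟩ := (dense_range_realEmbeddingsPi hσr.injective hx).exists_dist_lt
    (fun i => (z (Fin.castAdd t i)).re - (tt i).re) hδ
  refine ⟨otT σr σc a (Fin.append tt fun j => z (Fin.natAdd s j) - σc j a),
    ⟨a, _, fun i => Fin.append_left _ _ i, rfl⟩,
    (dist_pi_lt_iff hδ).2 (Fin.addCases (fun i => ?_) fun j => by simpa using hδ)⟩
  rw [otT_castAdd, Fin.append_left, Complex.dist_of_im_eq (by simp [hz i])]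
  simpa [Real.dist_eq, sub_sub, add_comm] using (dist_le_pi_dist _ _ i).trans_lt ha

/-- Let `K` be a number field of degree `s + 2t`, `t > 0`, with `s` real
embeddings `σr i` and complex embeddings `σc j` (one per conjugate pair), and let the additive
group `𝓞 K` act on `ℍ^s × ℂ^t` by the translations `T_a`.  Fix `(t₁,…,t_s) ∈ ℍ^s` and let
`T = {z : zᵢ = tᵢ, i ≤ s}`.  Then the closure of the orbit `𝓞 K · T` equals
`Z = {z : Im zᵢ = Im tᵢ, i ≤ s}`. -/
theorem ot_orbit_closure_of_leaf
    (K : Type*) [Field K] [NumberField K] (s t : ℕ) (ht : 0 < t)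
    (hdeg : Module.finrank ℚ K = s + 2 * t)
    (σr : Fin s → (K →+* ℝ)) (hσr : Function.Bijective σr)
    (σc : Fin t → (K →+* ℂ)) (hσc : Function.Injective σc)
    (hnonreal : ∀ j, ∃ x, (σc j x).im ≠ 0)
    (hnonconj : ∀ j k, (starRingEnd ℂ).comp (σc j : K →+* ℂ) ≠ σc k)
    (tt : Fin s → ℂ) (htt : ∀ i, 0 < (tt i).im) :
    closure {z : Fin (s + t) → ℂ | ∃ (a : 𝓞 K) (w : Fin (s + t) → ℂ),
        (∀ i : Fin s, w (Fin.castAdd t i) = tt i) ∧ z = otT σr σc a w}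
      = {z : Fin (s + t) → ℂ | ∀ i : Fin s, (z (Fin.castAdd t i)).im = (tt i).im} :=
  ot_orbit_closure_of_leaf_general K s t ht σr hσr σc hnonreal tt
end
end

section
/- Let K be a number field of degree n = s + 2t, t > 0, with s ≥ 1 real embeddings, Γ = O_K ⋊ U acting on ℍ^s × ℂ^t as above with compact quotient M_K, and π : ℍ^s × ℂ^t → M_K the projection. Let Σ be the foliation on M_K induced by span(∂/∂z_{s+1},…,∂/∂z_{s+t}), let L be a leaf of Σ and Z its closure in M_K. Then π^{-1}(Z) contains the set {z : Im z_i = α_i, i = 1,…,s} for some positive reals α_i. -/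
/-! By Dedekind's independence of characters, the image of `𝓞 K` under the real embeddings spans
`ℝ^s`, so every point of `ℝ^s` lies within a fixed distance `R` of it. Cocompactness provides
units `u` whose real embeddings are all positive and arbitrarily small, and multiplying by `u`
shrinks that distance to `max σᵢ(u) · R`; hence `𝓞 K` is dense in `ℝ^s`. Translating the leaf
through `tt` by elements of `𝓞 K` therefore approximates every point of `{Im zᵢ = Im ttᵢ}`. -/

open NumberField

noncomputable section

/-- Multiplicative part of the OT action. -/
def otR {K : Type*} [Field K] [NumberField K] {s t : ℕ}
    (σr : Fin s → (K →+* ℝ)) (σc : Fin t → (K →+* ℂ)) (u : (𝓞 K)ˣ)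
    (z : Fin (s + t) → ℂ) : Fin (s + t) → ℂ :=
  fun i => otEmb σr σc i (algebraMap (𝓞 K) K (u : 𝓞 K)) * z i

open Function Set Submodule

theorem otEmb_one {K : Type*} [Field K] {s t : ℕ} (σr : Fin s → (K →+* ℝ))
    (σc : Fin t → (K →+* ℂ)) (k : Fin (s + t)) : otEmb σr σc k 1 = 1 := by
  refine Fin.addCases (fun i => ?_) (fun j => ?_) k <;> simp [otEmb]

theorem LinearIndependent.span_range_swap_eq_top {ι X 𝕜 : Type*} [Fintype ι] [Field 𝕜]
    {f : ι → X → 𝕜} (hf : LinearIndependent 𝕜 f) :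
    span 𝕜 (range (swap f)) = ⊤ := by
  classical
  by_contra hne
  obtain ⟨φ, hφ, hker⟩ :=
    (span 𝕜 (range (swap f))).exists_le_ker_of_lt_top (lt_top_iff_ne_top.2 hne)
  let c : ι → 𝕜 := fun i => φ fun j => if i = j then 1 else 0
  have hc : ∑ i, c i • f i = 0 := by
    funext x
    have hx := hker (subset_span ⟨x, rfl⟩)
    rw [LinearMap.mem_ker, φ.pi_apply_eq_sum_univ] at hx
    simpa [c, mul_comm] using hx
  have hc0 : ∀ i, c i = 0 := Fintype.linearIndependent_iff.1 hf c hc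
  refine hφ (LinearMap.ext fun v => ?_)
  rw [φ.pi_apply_eq_sum_univ v, LinearMap.zero_apply]
  exact Finset.sum_eq_zero fun i _ => by rw [show (φ fun j => _) = c i from rfl, hc0 i, smul_zero]

theorem AddSubgroup.exists_norm_sub_le_of_span_eq_top {E : Type*} [NormedAddCommGroup E]
    [NormedSpace ℝ E] [FiniteDimensional ℝ E] (A : AddSubgroup E)
    (hA : span ℝ (A : Set E) = ⊤) :
    ∃ R, ∀ v : E, ∃ a ∈ A, ‖v - a‖ ≤ R := by
  let B := Module.Basis.ofSpan hA.ge
  have : Fintype _ := FiniteDimensional.fintypeBasisIndex B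
  have hBA : span ℤ (range B) ≤ A.toIntSubmodule :=
    span_le.2 (Module.Basis.ofSpan_subset hA.ge)
  refine ⟨∑ i, ‖B i‖, fun v => ⟨ZSpan.floor B v, hBA (ZSpan.floor B v).2, ?_⟩⟩
  exact ZSpan.norm_fract_le B v

theorem Subring.dense_of_span_eq_top_of_forall_exists_mem_Ioo {ι : Type*} [Fintype ι]
    (S : Subring (ι → ℝ)) (hspan : span ℝ (S : Set (ι → ℝ)) = ⊤)
    (hsmall : ∀ ε > 0, ∃ v ∈ S, ∀ i, v i ∈ Ioo 0 ε) :
    Dense (S : Set (ι → ℝ)) := by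
  obtain ⟨R, hR⟩ := S.toAddSubgroup.exists_norm_sub_le_of_span_eq_top hspan
  have hR0 : 0 ≤ R := let ⟨_, _, h⟩ := hR 0; (norm_nonneg _).trans h
  refine Metric.dense_iff.2 fun x r hr => ?_
  obtain ⟨v, hvS, hv⟩ := hsmall (r / (R + 1)) (by positivity)
  -- rescale by `v`: a point of `S` within `R` of `x / v` gives one within `v * R` of `x`
  obtain ⟨a, haS, ha⟩ := hR (x / v)
  refine ⟨v * a, ?_, S.mul_mem hvS haS⟩
  rw [Metric.mem_ball, dist_pi_lt_iff hr]
  intro i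
  obtain ⟨hvi, hvi_lt⟩ := hv i
  have hai : |x i / v i - a i| ≤ R := (norm_le_pi_norm (x / v - a) i).trans ha
  calc dist (v i * a i) (x i) = |v i * (x i / v i - a i)| := by
        rw [Real.dist_eq, abs_sub_comm, mul_sub, mul_div_cancel₀ _ hvi.ne']
    _ = v i * |x i / v i - a i| := by rw [abs_mul, abs_of_pos hvi]
    _ ≤ v i * R := mul_le_mul_of_nonneg_left hai hvi.le
    _ < r / (R + 1) * (R + 1) := by nlinarith
    _ = r := div_mul_cancel₀ r (by positivity)

section RingOfIntegers

variable {K : Type*} [Field K] {ι : Type*} (σ : ι → K →+* ℝ)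

def otRealEmb : 𝓞 K →+* (ι → ℝ) :=
  RingHom.pi fun i => (σ i).comp (algebraMap (𝓞 K) K)

theorem span_range_otRealEmb_eq_top [NumberField K] [Fintype ι] (hσ : Injective σ) :
    span ℝ (range (otRealEmb σ)) = ⊤ := by
  let F : ι → (𝓞 K →* ℝ) := fun i => ((σ i).comp (algebraMap (𝓞 K) K)).toMonoidHom
  have hF : Injective F := fun i j h =>
    hσ (IsLocalization.ringHom_ext (nonZeroDivisors (𝓞 K)) (RingHom.ext (DFunLike.congr_fun h :)))
  exact ((linearIndependent_monoidHom (𝓞 K) ℝ).comp F hF).span_range_swap_eq_top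

theorem dense_range_otRealEmb [NumberField K] [Fintype ι] (hσ : Injective σ)
    (hsmall : ∀ ε > 0, ∃ u : (𝓞 K)ˣ, ∀ i, otRealEmb σ u i ∈ Ioo 0 ε) :
    Dense (range (otRealEmb σ)) := by
  rw [← RingHom.coe_range]
  refine (otRealEmb σ).range.dense_of_span_eq_top_of_forall_exists_mem_Ioo ?_ fun ε hε => ?_
  · rw [RingHom.coe_range, span_range_otRealEmb_eq_top σ hσ]
  · obtain ⟨u, hu⟩ := hsmall ε hε
    exact ⟨_, ⟨u, rfl⟩, hu⟩

end RingOfIntegers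

section OT

variable {K : Type*} [Field K] [NumberField K] {s t : ℕ}
  (σr : Fin s → (K →+* ℝ)) (σc : Fin t → (K →+* ℂ))

theorem exists_unit_otRealEmb_mem_Ioo {C : Set (Fin (s + t) → ℂ)} (hC : Bornology.IsBounded C)
    (hCpos : C ⊆ {z | ∀ i : Fin s, 0 < (z (Fin.castAdd t i)).im})
    (hcover : ∀ z ∈ {z : Fin (s + t) → ℂ | ∀ i : Fin s, 0 < (z (Fin.castAdd t i)).im},
      ∃ (a : 𝓞 K) (u : (𝓞 K)ˣ), otT σr σc a (otR σr σc u z) ∈ C)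
    {ε : ℝ} (hε : 0 < ε) :
    ∃ u : (𝓞 K)ˣ, ∀ i, otRealEmb σr u i ∈ Ioo 0 ε := by
  obtain ⟨M, hM⟩ := hC.exists_norm_le
  obtain ⟨y, hy, hMy⟩ : ∃ y : ℝ, 0 < y ∧ M < ε * y :=
    ⟨|M| / ε + 1, by positivity, by
      rw [mul_add, mul_div_cancel₀ _ hε.ne', mul_one]; linarith [le_abs_self M]⟩
  -- a point high up in every `ℍ` factor can only be moved into `C` by a unit that is small
  obtain ⟨a, u, hzC⟩ := hcover (fun _ => y * Complex.I) fun i => by simpa using hy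
  refine ⟨u, fun i => ?_⟩
  have him : (otT σr σc a (otR σr σc u fun _ => y * Complex.I) (Fin.castAdd t i)).im =
      otRealEmb σr u i * y := by
    simp [otT, otR, otEmb, otRealEmb]
  constructor
  · exact (mul_pos_iff_of_pos_right hy).1 (him ▸ hCpos hzC i)
  · refine lt_of_mul_lt_mul_right ?_ hy.le
    calc otRealEmb σr u i * y ≤ ‖otT σr σc a (otR σr σc u fun _ => y * Complex.I)‖ :=
          him ▸ (Complex.im_le_norm _).trans (norm_le_pi_norm _ _)
      _ ≤ M := hM _ hzC
      _ < ε * y := hMy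

end OT

theorem ot_leaf_closure_contains_level_set_general
    (K : Type*) [Field K] [NumberField K] (s t : ℕ)
    (σr : Fin s → (K →+* ℝ)) (hσr : Function.Bijective σr)
    (σc : Fin t → (K →+* ℂ))
    (U : Subgroup (𝓞 K)ˣ)
    -- the quotient of `ℍ^s × ℂ^t` by `Γ` is compact:
    (hcocompact : ∃ C : Set (Fin (s + t) → ℂ), IsCompact C ∧
      C ⊆ {z | ∀ i : Fin s, 0 < (z (Fin.castAdd t i)).im} ∧
      ∀ z ∈ {z : Fin (s + t) → ℂ | ∀ i : Fin s, 0 < (z (Fin.castAdd t i)).im},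
        ∃ (a : 𝓞 K) (u : (𝓞 K)ˣ), u ∈ U ∧ otT σr σc a (otR σr σc u z) ∈ C)
    (tt : Fin s → ℂ) (htt : ∀ i, 0 < (tt i).im) :
    ∃ α : Fin s → ℝ, (∀ i, 0 < α i) ∧
      {z : Fin (s + t) → ℂ | ∀ i : Fin s, (z (Fin.castAdd t i)).im = α i} ⊆
        closure {z : Fin (s + t) → ℂ |
          ∃ (a : 𝓞 K) (u : (𝓞 K)ˣ) (w : Fin (s + t) → ℂ), u ∈ U ∧
            (∀ i : Fin s, w (Fin.castAdd t i) = tt i) ∧ z = otT σr σc a (otR σr σc u w)} := by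
  obtain ⟨C, hC, hCpos, hcover⟩ := hcocompact
  have hdense : Dense (range (otRealEmb σr)) :=
    dense_range_otRealEmb σr hσr.injective fun ε hε =>
      exists_unit_otRealEmb_mem_Ioo σr σc hC.isBounded hCpos
        (fun z hz => let ⟨a, u, _, h⟩ := hcover z hz; ⟨a, u, h⟩) hε
  refine ⟨fun i => (tt i).im, htt, fun z hz => Metric.mem_closure_iff.2 fun ε hε => ?_⟩
  obtain ⟨_, hb, b, rfl⟩ :=
    Metric.dense_iff.1 hdense (fun i => (z (Fin.castAdd t i)).re - (tt i).re) ε hε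
  let y : Fin (s + t) → ℂ :=
    Fin.append (fun i => tt i + otRealEmb σr b i) (fun j => z (Fin.natAdd s j))
  refine ⟨y, ⟨b, 1, fun k => y k - otEmb σr σc k (algebraMap (𝓞 K) K b), one_mem U,
    fun i => by simp [y, otEmb, otRealEmb], by funext k; simp [otT, otR, otEmb_one]⟩, ?_⟩
  rw [dist_pi_lt_iff hε]
  refine Fin.addCases (fun i => ?_) (fun j => by simpa [y] using hε)
  rw [show y (Fin.castAdd t i) = tt i + otRealEmb σr b i from Fin.append_left _ _ i,
    Complex.dist_of_im_eq (by simp [hz i])]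
  calc _ = dist (otRealEmb σr b i) ((z (Fin.castAdd t i)).re - (tt i).re) := by
        simp only [Real.dist_eq, Complex.add_re, Complex.ofReal_re]
        rw [abs_sub_comm]; congr 1; ring
    _ < ε := (dist_pi_lt_iff hε).1 hb i

/-- Let `M_K = (ℍ^s × ℂ^t)/Γ` be an Oeljeklaus–Toma manifold,
`π : ℍ^s × ℂ^t → M_K` the projection, and `Σ` the foliation on `M_K` induced by
`span(∂/∂z_{s+1},…,∂/∂z_{s+t})`.  If `Z` is the closure in `M_K` of a leaf of `Σ`, then
`π⁻¹(Z)` contains a set `{z : Im zᵢ = αᵢ, i ≤ s}` for some positive reals `αᵢ`.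
Upstairs this reads:  `π⁻¹(Z)` is the closure of the `Γ`-orbit of a lifted leaf
`T_{t₁,…,t_s} = {z : zᵢ = tᵢ, i ≤ s}` (every element of `Γ = 𝓞 K ⋊ U` is `T_a ∘ R_u`), and
this closure contains `{z : Im zᵢ = αᵢ}` for some `α ∈ (ℝ_{>0})^s`. -/
theorem ot_leaf_closure_contains_level_set
    (K : Type*) [Field K] [NumberField K] (s t : ℕ) (ht : 0 < t) (hs : 1 ≤ s)
    (hdeg : Module.finrank ℚ K = s + 2 * t)
    (σr : Fin s → (K →+* ℝ)) (hσr : Function.Bijective σr)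
    (σc : Fin t → (K →+* ℂ)) (hσc : Function.Injective σc)
    (hnonreal : ∀ j, ∃ x, (σc j x).im ≠ 0)
    (hnonconj : ∀ j k, (starRingEnd ℂ).comp (σc j : K →+* ℂ) ≠ σc k)
    (U : Subgroup (𝓞 K)ˣ)
    (hU : ∀ u ∈ U, ∀ i : Fin s, 0 < σr i (algebraMap (𝓞 K) K (u : 𝓞 K)))
    -- the quotient of `ℍ^s × ℂ^t` by `Γ` is compact:
    (hcocompact : ∃ C : Set (Fin (s + t) → ℂ), IsCompact C ∧
      C ⊆ {z | ∀ i : Fin s, 0 < (z (Fin.castAdd t i)).im} ∧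
      ∀ z ∈ {z : Fin (s + t) → ℂ | ∀ i : Fin s, 0 < (z (Fin.castAdd t i)).im},
        ∃ (a : 𝓞 K) (u : (𝓞 K)ˣ), u ∈ U ∧ otT σr σc a (otR σr σc u z) ∈ C)
    (tt : Fin s → ℂ) (htt : ∀ i, 0 < (tt i).im) :
    ∃ α : Fin s → ℝ, (∀ i, 0 < α i) ∧
      {z : Fin (s + t) → ℂ | ∀ i : Fin s, (z (Fin.castAdd t i)).im = α i} ⊆
        closure {z : Fin (s + t) → ℂ |
          ∃ (a : 𝓞 K) (u : (𝓞 K)ˣ) (w : Fin (s + t) → ℂ), u ∈ U ∧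
            (∀ i : Fin s, w (Fin.castAdd t i) = tt i) ∧ z = otT σr σc a (otR σr σc u w)} :=
  ot_leaf_closure_contains_level_set_general K s t σr hσr σc U hcocompact tt htt

end
end
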